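/- Two rooted Σ-colored multitrees T and T' are rooted isomorphic if and only if their signatures are equal: σ(T) = σ(T'), where σ(T) = (δ(τ), M(τ)) for the ordered tree τ on T that lexicographically maximizes first δ and then M. -/

import Mathlib

inductive OTree (S : Type) : Type where
  | node : S → List (ℕ × OTree S) → OTree S

namespace OTree

variable {S : Type}

mutual
  def delta : OTree S → ℕ → List (S × ℕ)
    | .node c l, d => (c, d) :: deltaList l d
  def deltaList : List (ℕ × OTree S) → ℕ → List (S × ℕ)
    | [], _ => []
    | (_, t) :: rest, d => delta t (d + 1) ++ deltaList rest d
end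

mutual
  def mseq : OTree S → List ℕ
    | .node _ l => mseqList l
  def mseqList : List (ℕ × OTree S) → List ℕ
    | [] => []
    | (m, t) :: rest => (m :: mseq t) ++ mseqList rest
end

inductive RIso : OTree S → OTree S → Prop where
  | node (c : S) (l l' : List (ℕ × OTree S))
      (e : Fin l.length ≃ Fin l'.length)
      (h1 : ∀ i : Fin l.length, (l.get i).1 = (l'.get (e i)).1)
      (h2 : ∀ i : Fin l.length, RIso (l.get i).2 (l'.get (e i)).2) :
      RIso (.node c l) (.node c l')

inductive IsSubtree : OTree S → OTree S → Prop where
  | refl (t : OTree S) : IsSubtree t t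
  | child {t u : OTree S} {c : S} {l : List (ℕ × OTree S)} {m : ℕ} :
      (m, u) ∈ l → IsSubtree t u → IsSubtree t (.node c l)

def deltaLt [LinearOrder S] (a b : List (S × ℕ)) : Prop :=
  List.Lex (Prod.Lex (· < ·) (· < ·)) a b

def sigLt [LinearOrder S] (a b : List (S × ℕ) × List ℕ) : Prop :=
  deltaLt a.1 b.1 ∨ (a.1 = b.1 ∧ List.Lex (· < ·) a.2 b.2)

def sigLe [LinearOrder S] (a b : List (S × ℕ) × List ℕ) : Prop :=
  a = b ∨ sigLt a b

def sigOf (t : OTree S) : List (S × ℕ) × List ℕ := (t.delta 0, t.mseq)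

def IsCanonical [LinearOrder S] (τ : OTree S) : Prop :=
  ∀ τ', RIso τ' τ → sigLe (sigOf τ') (sigOf τ)

def IsSignature [LinearOrder S] (T : OTree S) (s : List (S × ℕ) × List ℕ) : Prop :=
  (∃ τ, RIso τ T ∧ sigOf τ = s) ∧ ∀ τ, RIso τ T → sigLe (sigOf τ) s

def shiftk (k : ℕ) (l : List (S × ℕ)) : List (S × ℕ) := l.map fun p => (p.1, p.2 + k)

end OTree


/-!
The maximal signature over the isomorphism class of `T` depends only on that class, so isomorphic
trees have equal signatures. Conversely, an ordered tree is recovered from `(δ, M)`: below a vertex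
of depth `d`, the block of each child is the maximal run of entries of depth `≥ d + 2` following an
entry of depth `d + 1`. Equal signatures are therefore realised by one and the same ordered tree,
which is isomorphic to both `T` and `T'`.
-/

namespace OTree

variable {S : Type}

theorem RIso.symm {t t' : OTree S} (h : RIso t t') : RIso t' t := by
  induction h with
  | node c l l' e h1 _ ih =>
    refine .node c l' l e.symm (fun j => ?_) (fun j => ?_)
    · simpa using (h1 (e.symm j)).symm
    · simpa using ih (e.symm j)

theorem RIso.trans {t₁ t₂ t₃ : OTree S} (h₁₂ : RIso t₁ t₂) (h₂₃ : RIso t₂ t₃) : RIso t₁ t₃ := by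
  induction h₁₂ generalizing t₃ with
  | node c l l' e h1 _ ih =>
    cases h₂₃ with
    | node _ _ l'' e' h1' h2' =>
      exact .node c l l'' (e.trans e') (fun i => (h1 i).trans (h1' (e i)))
        (fun i => ih i (h2' (e i)))

mutual
theorem le_of_mem_delta : ∀ (t : OTree S) (d : ℕ), ∀ p ∈ delta t d, d ≤ p.2
  | .node c l, d => by
    rw [delta, List.forall_mem_cons]
    exact ⟨le_rfl, fun p hp => Nat.le_of_succ_le (succ_le_of_mem_deltaList l d p hp)⟩

theorem succ_le_of_mem_deltaList : ∀ (l : List (ℕ × OTree S)) (d : ℕ),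
    ∀ p ∈ deltaList l d, d + 1 ≤ p.2
  | [], _ => by simp [deltaList]
  | (_, t) :: rest, d => by
    rw [deltaList, List.forall_mem_append]
    exact ⟨le_of_mem_delta t (d + 1), succ_le_of_mem_deltaList rest d⟩
end

mutual
theorem length_delta : ∀ (t : OTree S) (d : ℕ), (delta t d).length = (mseq t).length + 1
  | .node c l, d => by rw [delta, mseq, List.length_cons, length_deltaList l d]

theorem length_deltaList : ∀ (l : List (ℕ × OTree S)) (d : ℕ),
    (deltaList l d).length = (mseqList l).length
  | [], _ => by simp [deltaList, mseqList]
  | (m, t) :: rest, d => by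
    rw [deltaList, mseqList, List.length_append, List.length_append, length_delta t (d + 1),
      length_deltaList rest d, List.length_cons]
end

/-- Every child block of `deltaList l d` starts at depth `d + 1`. -/
theorem takeWhile_deltaList (l : List (ℕ × OTree S)) (d : ℕ) :
    (deltaList l d).takeWhile (fun p => d + 2 ≤ p.2) = [] := by
  match l with
  | [] => simp [deltaList]
  | (_, .node _ _) :: _ => simp [deltaList, delta]

theorem takeWhile_deltaList_append (l rest : List (ℕ × OTree S)) (d : ℕ) :
    (deltaList l (d + 1) ++ deltaList rest d).takeWhile (fun p => d + 2 ≤ p.2) =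
      deltaList l (d + 1) := by
  rw [List.takeWhile_append_of_pos, takeWhile_deltaList, List.append_nil]
  simpa [Nat.succ_le_iff] using succ_le_of_mem_deltaList l (d + 1)

mutual
theorem eq_of_delta_eq_of_mseq_eq : ∀ (t t' : OTree S) (d : ℕ),
    delta t d = delta t' d → mseq t = mseq t' → t = t'
  | .node c l, .node c' l', d => by
    intro hδ hM
    simp only [delta, mseq, List.cons.injEq, Prod.mk.injEq, and_true] at hδ hM
    obtain ⟨rfl, hδ⟩ := hδ
    rw [eq_of_deltaList_eq_of_mseqList_eq l l' d hδ hM]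

theorem eq_of_deltaList_eq_of_mseqList_eq : ∀ (l l' : List (ℕ × OTree S)) (d : ℕ),
    deltaList l d = deltaList l' d → mseqList l = mseqList l' → l = l'
  | [], [], _ => fun _ _ => rfl
  | [], (_, .node _ _) :: _, _ | (_, .node _ _) :: _, [], _ => by simp [deltaList, delta]
  | (m, .node c lc) :: rest, (m', .node c' lc') :: rest', d => by
    intro hδ hM
    simp only [deltaList, delta, List.cons_append, List.cons.injEq, Prod.mk.injEq,
      and_true] at hδ
    obtain ⟨rfl, hδ⟩ := hδ
    have hδc : deltaList lc (d + 1) = deltaList lc' (d + 1) := by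
      rw [← takeWhile_deltaList_append lc rest, hδ, takeWhile_deltaList_append]
    rw [hδc] at hδ
    have hδr := List.append_cancel_left hδ
    simp only [mseqList, mseq, List.cons_append, List.cons.injEq] at hM
    obtain ⟨rfl, hM⟩ := hM
    have hlen : (mseqList lc).length = (mseqList lc').length := by
      rw [← length_deltaList lc (d + 1), ← length_deltaList lc' (d + 1), hδc]
    obtain ⟨hMc, hMr⟩ := List.append_inj hM hlen
    rw [eq_of_deltaList_eq_of_mseqList_eq lc lc' (d + 1) hδc hMc,
      eq_of_deltaList_eq_of_mseqList_eq rest rest' d hδr hMr]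
end

theorem sigOf_injective : Function.Injective (sigOf (S := S)) := fun t t' h =>
  eq_of_delta_eq_of_mseq_eq t t' 0 (congrArg Prod.fst h) (congrArg Prod.snd h)

variable [LinearOrder S]

theorem sigLe_antisymm {a b : List (S × ℕ) × List ℕ} (hab : sigLe a b) (hba : sigLe b a) :
    a = b := by
  rcases hab with hab | hab
  · exact hab
  rcases hba with hba | hba
  · exact hba.symm
  exfalso
  rcases hab with hab | ⟨he, hab⟩ <;> rcases hba with hba | ⟨he', hba⟩
  · exact asymm (r := List.Lex _) hab hba
  · rw [he'] at hab; exact irrefl (r := List.Lex _) _ hab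
  · rw [he] at hba; exact irrefl (r := List.Lex _) _ hba
  · exact asymm (r := List.Lex _) hab hba

theorem IsSignature.of_riso {T T' : OTree S} {s : List (S × ℕ) × List ℕ}
    (hs : IsSignature T s) (h : RIso T T') : IsSignature T' s :=
  ⟨hs.1.imp fun _ hτ => ⟨hτ.1.trans h, hτ.2⟩, fun τ hτ => hs.2 τ (hτ.trans h.symm)⟩

theorem IsSignature.unique {T : OTree S} {s s' : List (S × ℕ) × List ℕ}
    (hs : IsSignature T s) (hs' : IsSignature T s') : s = s' := by
  obtain ⟨⟨τ, hτ, rfl⟩, hmax⟩ := hs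
  obtain ⟨⟨τ', hτ', rfl⟩, hmax'⟩ := hs'
  exact sigLe_antisymm (hmax' τ hτ) (hmax τ' hτ')

end OTree

/-- Two rooted Σ-colored multitrees are rooted isomorphic iff their signatures
are equal. -/
theorem riso_iff_signature_eq {S : Type} [LinearOrder S] (T T' : OTree S)
    (s s' : List (S × ℕ) × List ℕ)
    (hs : OTree.IsSignature T s) (hs' : OTree.IsSignature T' s') :
    OTree.RIso T T' ↔ s = s' := by
  refine ⟨fun h => (hs.of_riso h).unique hs', ?_⟩
  rintro rfl
  obtain ⟨τ, hτ, hτs⟩ := hs.1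
  obtain ⟨τ', hτ', hτs'⟩ := hs'.1
  obtain rfl : τ = τ' := OTree.sigOf_injective (hτs.trans hτs'.symm)
  exact hτ.symm.trans hτ'
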